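/- arXiv:1101.4792 — 3 statements merged into one kernel-verified Lean document; each statement's English description precedes it below -/
import Mathlib

section
/- For every prime $\ell$, every $g \ge 1$ and every $d \in \{0,\dots,g\}$, the proportion of matrices in $\mathrm{GL}_g(\mathbb{F}_\ell)$ whose $1$-eigenspace has dimension $d$ equals $\mathfrak{P}_{\mathrm{GL}}(\ell,g,d) = \frac{1}{\#\mathrm{GL}_d(\mathbb{F}_\ell)} \sum_{j=0}^{g-d} \frac{(-1)^j \ell^{(j^2-j)/2}}{\ell^{dj} \cdot \#\mathrm{GL}_j(\mathbb{F}_\ell)}$, where $\#\mathrm{GL}_0(\mathbb{F}_\ell) = 1$. -/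
open Matrix Finset Filter

/-- The standard symplectic form matrix `Ω = [[0, I_g], [-I_g, 0]]` over `ZMod ℓ`. -/
def Om (ℓ g : ℕ) : Matrix (Fin g ⊕ Fin g) (Fin g ⊕ Fin g) (ZMod ℓ) :=
  Matrix.fromBlocks 0 1 (-1) 0

/-- Membership in the group `GSp_{2g}^{(d)}(F_ℓ)` of `d`-symplectic similitudes:
invertible matrices `M` with `Mᵀ Ω M = d Ω`. -/
def inGSp (ℓ g : ℕ) (d : ZMod ℓ) (M : Matrix (Fin g ⊕ Fin g) (Fin g ⊕ Fin g) (ZMod ℓ)) :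
    Prop :=
  IsUnit M.det ∧ Mᵀ * Om ℓ g * M = d • Om ℓ g

/-- The dimension of the eigenspace of `M` for the eigenvalue `1`, i.e. `dim ker (M - I)`. -/
noncomputable def fixdim {n : Type} [Fintype n] [DecidableEq n] {R : Type} [CommRing R]
    (M : Matrix n n R) : ℕ :=
  Module.finrank R (LinearMap.ker (M - 1).mulVecLin)

/-- `𝔓(q, ℓ, g, k)`: the proportion of matrices in `GSp_{2g}^{(d)}(F_ℓ)` whose
`1`-eigenspace is `k`-dimensional. -/
noncomputable def PGSp (ℓ g : ℕ) (d : ZMod ℓ) (k : ℕ) : ℝ :=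
  (Nat.card {M : Matrix (Fin g ⊕ Fin g) (Fin g ⊕ Fin g) (ZMod ℓ) //
      inGSp ℓ g d M ∧ fixdim M = k} : ℝ) /
  (Nat.card {M : Matrix (Fin g ⊕ Fin g) (Fin g ⊕ Fin g) (ZMod ℓ) // inGSp ℓ g d M} : ℝ)

/-- `𝔓_Sp(ℓ, g, k)`: the corresponding proportion for `Sp_{2g}(F_ℓ) = GSp_{2g}^{(1)}(F_ℓ)`. -/
noncomputable def PSp (ℓ g k : ℕ) : ℝ := PGSp ℓ g 1 k

/-- `𝔓_GL(ℓ, g, k)`: the proportion of matrices in `GL_g(F_ℓ)` whose `1`-eigenspace is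
`k`-dimensional. -/
noncomputable def PGL (ℓ g k : ℕ) : ℝ :=
  (Nat.card {M : Matrix (Fin g) (Fin g) (ZMod ℓ) // IsUnit M.det ∧ fixdim M = k} : ℝ) /
  (Nat.card {M : Matrix (Fin g) (Fin g) (ZMod ℓ) // IsUnit M.det} : ℝ)

/-- `#GL_n(F_ℓ)`, with the convention that `GL_0(F_ℓ)` has one element. -/
noncomputable def cardGL (ℓ n : ℕ) : ℕ :=
  Nat.card {M : Matrix (Fin n) (Fin n) (ZMod ℓ) // IsUnit M.det}


/-!
Write `F e` for the number of `M ∈ GL_g(𝔽_ℓ)` whose fixed space has dimension `e`, and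
`N(j, e) = ∏_{i<j} (ℓ^e - ℓ^i)` for the number of linearly independent `j`-tuples in an
`e`-dimensional space. The tuples fixed by `M` are the independent tuples of its fixed space, and
`GL_g` acts transitively on independent `j`-tuples, so Burnside's lemma gives
`∑_e F e · N(j, e) = #GL_g` for every `j ≤ g`. This triangular system is inverted by the
`q`-binomial identity `∑_{k ≤ m} (-1)^k q^(k choose 2) [m choose k]_q = 0` for `m > 0`.
-/

noncomputable section

/-- For a prime power `q`, the number of linearly independent `k`-tuples in `𝔽_q^n`
(zero when `k > n`). -/
def frameCount (q : ℝ) (k n : ℕ) : ℝ := ∏ i ∈ range k, (q ^ n - q ^ i)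

def gaussBinom (q : ℝ) (m k : ℕ) : ℝ := frameCount q k m / frameCount q k k

end

section QAnalogues

variable {q : ℝ}

lemma frameCount_succ (k n : ℕ) : frameCount q (k + 1) n = frameCount q k n * (q ^ n - q ^ k) :=
  prod_range_succ _ _

lemma frameCount_succ_succ (k n : ℕ) :
    frameCount q (k + 1) (n + 1) = (q ^ (n + 1) - 1) * q ^ k * frameCount q k n := by
  have h := pow_card_mul_prod (s := range k) (b := q) (f := fun i => q ^ n - q ^ i)
  rw [card_range] at h
  rw [frameCount, prod_range_succ', frameCount, pow_zero, mul_comm, mul_assoc, h]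
  congr 2 with i
  ring

lemma frameCount_eq_zero_of_lt {k n : ℕ} (h : n < k) : frameCount q k n = 0 :=
  prod_eq_zero (mem_range.2 h) (sub_self _)

lemma frameCount_pos (hq : 1 < q) {k n : ℕ} (h : k ≤ n) : 0 < frameCount q k n :=
  prod_pos fun _ hi => sub_pos.2 (pow_lt_pow_right₀ hq ((mem_range.1 hi).trans_le h))

lemma frameCount_add_add (d k m : ℕ) :
    frameCount q (d + k) (d + m) = frameCount q d (d + m) * q ^ (d * k) * frameCount q k m := by
  have h := pow_card_mul_prod (s := range k) (b := q ^ d) (f := fun i => q ^ m - q ^ i)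
  rw [card_range, ← pow_mul] at h
  unfold frameCount
  rw [prod_range_add, mul_assoc, h]
  congr 2 with i
  ring

lemma natCast_prod_pow_sub_pow {p : ℕ} (hp : 1 ≤ p) (k n : ℕ) :
    ((∏ i ∈ range k, (p ^ n - p ^ i) : ℕ) : ℝ) = frameCount p k n := by
  rcases le_or_gt k n with hkn | hnk
  · rw [Nat.cast_prod, frameCount]
    refine prod_congr rfl fun i hi => ?_
    rw [Nat.cast_sub (Nat.pow_le_pow_right hp ((mem_range.1 hi).le.trans hkn))]
    push_cast
    rfl
  · rw [frameCount_eq_zero_of_lt hnk,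
      prod_eq_zero (f := fun i => p ^ n - p ^ i) (mem_range.2 hnk) (Nat.sub_self _), Nat.cast_zero]

lemma gaussBinom_eq_zero_of_lt {m k : ℕ} (h : m < k) : gaussBinom q m k = 0 := by
  rw [gaussBinom, frameCount_eq_zero_of_lt h, zero_div]

lemma gaussBinom_zero_right (m : ℕ) : gaussBinom q m 0 = 1 := by
  simp [gaussBinom, frameCount]

lemma gaussBinom_succ_succ (hq : 1 < q) (m k : ℕ) :
    gaussBinom q (m + 1) (k + 1) = gaussBinom q m k + q ^ (k + 1) * gaussBinom q m (k + 1) := by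
  have hk := (frameCount_pos hq le_rfl (k := k)).ne'
  have hk1 : q ^ (k + 1) - 1 ≠ 0 := (sub_pos.2 (one_lt_pow₀ hq k.succ_ne_zero)).ne'
  have hq0 : q ^ k ≠ 0 := pow_ne_zero _ (by linarith)
  simp only [gaussBinom, frameCount_succ_succ, frameCount_succ k m]
  field_simp
  ring

lemma sum_alternating_gaussBinom (hq : 1 < q) {m N : ℕ} (h : m ≤ N) :
    ∑ k ∈ range (N + 1), (-1) ^ k * q ^ k.choose 2 * gaussBinom q m k =
      if m = 0 then 1 else 0 := by
  rw [sum_range_succ', gaussBinom_zero_right]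
  cases m with
  | zero =>
    rw [sum_eq_zero fun k _ => by rw [gaussBinom_eq_zero_of_lt k.succ_pos, mul_zero]]
    simp
  | succ m =>
    -- Pascal's rule turns the `(k + 1)`-st term into `t (k + 1) - t k`.
    let t (k : ℕ) : ℝ := (-1) ^ k * q ^ k.choose 2 * q ^ k * gaussBinom q m k
    have hterm (k : ℕ) : (-1) ^ (k + 1) * q ^ (k + 1).choose 2 * gaussBinom q (m + 1) (k + 1) =
        t (k + 1) - t k := by
      simp only [t, Nat.choose_succ_succ, Nat.choose_one_right, gaussBinom_succ_succ hq]
      ring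
    obtain ⟨N, rfl⟩ : ∃ N', N = N' + 1 := ⟨N - 1, by omega⟩
    have htop : t (N + 1) = 0 := by
      simp only [t, gaussBinom_eq_zero_of_lt (show m < N + 1 by omega), mul_zero]
    rw [sum_congr rfl fun k _ => hterm k, sum_range_sub t, htop]
    simp [t, gaussBinom_zero_right]

lemma sum_alternating_mul_frameCount (hq : 1 < q) {d e N : ℕ} (he : e ≤ d + N) :
    ∑ k ∈ range (N + 1), (-1) ^ k * q ^ k.choose 2 / (q ^ (d * k) * frameCount q k k) *
      frameCount q (d + k) e = if e = d then frameCount q d d else 0 := by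
  rcases lt_or_ge e d with hed | hde
  · rw [if_neg hed.ne]
    exact sum_eq_zero fun k _ => by
      rw [frameCount_eq_zero_of_lt (show e < d + k by omega), mul_zero]
  obtain ⟨m, rfl⟩ := Nat.exists_eq_add_of_le hde
  have hterm (k : ℕ) : (-1) ^ k * q ^ k.choose 2 / (q ^ (d * k) * frameCount q k k) *
      frameCount q (d + k) (d + m) =
        frameCount q d (d + m) * ((-1) ^ k * q ^ k.choose 2 * gaussBinom q m k) := by
    have hk := (frameCount_pos hq le_rfl (k := k)).ne'
    have hqdk : q ^ (d * k) ≠ 0 := pow_ne_zero _ (by linarith)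
    rw [frameCount_add_add, gaussBinom]
    field_simp
  rw [sum_congr rfl fun k _ => hterm k, ← mul_sum, sum_alternating_gaussBinom hq (by omega)]
  rcases Nat.eq_zero_or_pos m with rfl | hm
  · simp
  · simp [hm.ne']

lemma frameCount_inversion (hq : 1 < q) {n d : ℕ} (hd : d ≤ n) {F : ℕ → ℝ} {C : ℝ}
    (hF : ∀ j ≤ n, ∑ e ∈ range (n + 1), F e * frameCount q j e = C) :
    F d * frameCount q d d = C * ∑ k ∈ range (n - d + 1),
      (-1) ^ k * q ^ k.choose 2 / (q ^ (d * k) * frameCount q k k) := by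
  set a : ℕ → ℝ := fun k => (-1) ^ k * q ^ k.choose 2 / (q ^ (d * k) * frameCount q k k)
  calc F d * frameCount q d d
      = ∑ e ∈ range (n + 1), F e * if e = d then frameCount q d d else 0 := by
        simp [mul_ite, Nat.lt_succ_of_le hd]
    _ = ∑ e ∈ range (n + 1), F e * ∑ k ∈ range (n - d + 1), a k * frameCount q (d + k) e :=
        sum_congr rfl fun e he => by
          rw [sum_alternating_mul_frameCount hq (by have := mem_range.1 he; omega)]
    _ = ∑ k ∈ range (n - d + 1), a k * ∑ e ∈ range (n + 1), F e * frameCount q (d + k) e := by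
        simp only [mul_sum]
        rw [sum_comm]
        exact sum_congr rfl fun k _ => sum_congr rfl fun e _ => by ring
    _ = C * ∑ k ∈ range (n - d + 1), a k := by
        rw [mul_sum]
        exact sum_congr rfl fun k hk => by
          rw [hF (d + k) (by have := mem_range.1 hk; omega), mul_comm]

end QAnalogues

section LinearIndependentTuples

open Module

variable {K V : Type*} [DivisionRing K] [AddCommGroup V] [Module K V]

lemma card_linearIndependent_eq_frameCount [Fintype K] [Finite V] (k : ℕ) :
    (Nat.card {s : Fin k → V // LinearIndependent K s} : ℝ) =
      frameCount (Fintype.card K) k (finrank K V) := by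
  rcases le_or_gt k (finrank K V) with hk | hk
  · rw [card_linearIndependent hk,
      Fin.prod_univ_eq_prod_range (fun i => Fintype.card K ^ finrank K V - Fintype.card K ^ i),
      natCast_prod_pow_sub_pow Fintype.card_pos]
  · have : IsEmpty {s : Fin k → V // LinearIndependent K s} :=
      ⟨fun s => hk.not_ge (by simpa using s.2.fintype_card_le_finrank)⟩
    rw [Nat.card_of_isEmpty, frameCount_eq_zero_of_lt hk, Nat.cast_zero]

lemma exists_linearEquiv_apply_eq [FiniteDimensional K V] {ι : Type*} [Fintype ι]
    {v w : ι → V} (hv : LinearIndependent K v) (hw : LinearIndependent K w) :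
    ∃ f : V ≃ₗ[K] V, ∀ i, f (v i) = w i := by
  obtain ⟨Cv, hCv⟩ := Submodule.exists_isCompl (Submodule.span K (Set.range v))
  obtain ⟨Cw, hCw⟩ := Submodule.exists_isCompl (Submodule.span K (Set.range w))
  have hC : finrank K Cv = finrank K Cw := by
    have hv' := Submodule.finrank_add_eq_of_isCompl hCv
    have hw' := Submodule.finrank_add_eq_of_isCompl hCw
    rw [finrank_span_eq_card hv] at hv'
    rw [finrank_span_eq_card hw] at hw'
    omega
  let f := (Submodule.prodEquivOfIsCompl _ _ hCv).symm ≪≫ₗ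
    (((Basis.span hv).equiv (Basis.span hw) (Equiv.refl ι)).prodCongr
      (LinearEquiv.ofFinrankEq Cv Cw hC)) ≪≫ₗ Submodule.prodEquivOfIsCompl _ _ hCw
  refine ⟨f, fun i => ?_⟩
  have hvi : v i = (Basis.span hv i : V) := by rw [Basis.span_apply]
  simp only [f, LinearEquiv.trans_apply, hvi, Submodule.prodEquivOfIsCompl_symm_apply_left]
  rw [LinearEquiv.prodCongr_apply, Basis.equiv_apply, map_zero]
  simp [Basis.span_apply]

variable (K V) in
def linearIndependentTuples (k : ℕ) :
    SubMulAction (LinearMap.GeneralLinearGroup K V) (Fin k → V) where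
  carrier := {s | LinearIndependent K s}
  smul_mem' f _ hs := hs.map' f.toLinearEquiv.toLinearMap f.toLinearEquiv.ker

instance [FiniteDimensional K V] (k : ℕ) :
    MulAction.IsPretransitive (LinearMap.GeneralLinearGroup K V)
      (linearIndependentTuples K V k) where
  exists_smul_eq v w := by
    obtain ⟨f, hf⟩ := exists_linearEquiv_apply_eq v.2 w.2
    exact ⟨.ofLinearEquiv f, Subtype.ext (funext hf)⟩

end LinearIndependentTuples

section FixedTuples

open Module

variable {K V : Type*} [Field K] [AddCommGroup V] [Module K V]

def linearIndependentTuples.fixedByEquiv (f : LinearMap.GeneralLinearGroup K V) (k : ℕ) :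
    MulAction.fixedBy (linearIndependentTuples K V k) f ≃
      {s : Fin k → End.eigenspace (f : V →ₗ[K] V) 1 // LinearIndependent K s} where
  toFun x := ⟨fun i => ⟨x.1.1 i, End.mem_eigenspace_iff.2 <| by
      rw [one_smul]; exact congrFun (congrArg Subtype.val x.2) i⟩,
    LinearIndependent.of_comp (Submodule.subtype _) (x.1.2 : LinearIndependent K x.1.1)⟩
  invFun s := ⟨⟨fun i => s.1 i, s.2.map' _ (Submodule.ker_subtype _)⟩,
    Subtype.ext <| funext fun i => (End.mem_eigenspace_iff.1 (s.1 i).2).trans (one_smul K _)⟩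
  left_inv _ := rfl
  right_inv _ := rfl

variable [Fintype K] [Finite V]

lemma sum_frameCount_finrank_eigenspace [Fintype (LinearMap.GeneralLinearGroup K V)] {k : ℕ}
    (hk : k ≤ finrank K V) :
    ∑ f : LinearMap.GeneralLinearGroup K V,
      frameCount (Fintype.card K) k (finrank K (End.eigenspace (f : V →ₗ[K] V) 1)) =
      Nat.card (LinearMap.GeneralLinearGroup K V) := by
  let X := linearIndependentTuples K V k
  let _ (f : LinearMap.GeneralLinearGroup K V) : Fintype (MulAction.fixedBy X f) :=
    Fintype.ofFinite _
  let _ : Fintype (MulAction.orbitRel.Quotient (LinearMap.GeneralLinearGroup K V) X) :=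
    Fintype.ofFinite _
  have : Nonempty X := by
    have hpos := frameCount_pos (Nat.one_lt_cast.2 (Fintype.one_lt_card (α := K))) hk
    rw [← card_linearIndependent_eq_frameCount, Nat.cast_pos] at hpos
    exact (Nat.card_pos_iff.1 hpos).1
  obtain ⟨_⟩ := (MulAction.pretransitive_iff_unique_quotient_of_nonempty
    (LinearMap.GeneralLinearGroup K V) X).1 inferInstance
  have burnside := MulAction.sum_card_fixedBy_eq_card_orbits_mul_card_group
    (LinearMap.GeneralLinearGroup K V) X
  rw [Fintype.card_unique, one_mul] at burnside
  rw [Nat.card_eq_fintype_card, ← burnside, Nat.cast_sum]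
  refine sum_congr rfl fun f _ => ?_
  rw [← Nat.card_eq_fintype_card (α := MulAction.fixedBy X f),
    Nat.card_congr (linearIndependentTuples.fixedByEquiv f k),
    card_linearIndependent_eq_frameCount]

lemma sum_card_finrank_eigenspace_mul_frameCount {k : ℕ} (hk : k ≤ finrank K V) :
    ∑ e ∈ range (finrank K V + 1),
      (Nat.card {f : LinearMap.GeneralLinearGroup K V //
        finrank K (End.eigenspace (f : V →ₗ[K] V) 1) = e} : ℝ) *
        frameCount (Fintype.card K) k e =
      Nat.card (LinearMap.GeneralLinearGroup K V) := by
  have : Finite (V →ₗ[K] V) := Module.finite_of_finite K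
  let _ := Fintype.ofFinite (LinearMap.GeneralLinearGroup K V)
  rw [← sum_frameCount_finrank_eigenspace hk, ← sum_fiberwise_of_maps_to
    (g := fun f : LinearMap.GeneralLinearGroup K V => finrank K (End.eigenspace (f : V →ₗ[K] V) 1))
    fun f _ => mem_range.2 (Nat.lt_succ_of_le (Submodule.finrank_le _))]
  refine sum_congr rfl fun e _ => ?_
  rw [sum_congr rfl fun f hf => by rw [(mem_filter.1 hf).2], sum_const, nsmul_eq_mul,
    Nat.card_eq_fintype_card, Fintype.card_subtype]

end FixedTuples

section MatrixCounting

open Module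

variable {n K : Type} [Fintype n] [DecidableEq n]

noncomputable def unitDetEquivGL [CommRing K] : {M : Matrix n n K // IsUnit M.det} ≃ GL n K where
  toFun M := GeneralLinearGroup.mk'' M.1 M.2
  invFun A := ⟨A, (isUnit_iff_isUnit_det _).1 A.isUnit⟩
  left_inv _ := rfl
  right_inv _ := Units.ext rfl

variable [Field K]

lemma fixdim_eq_finrank_eigenspace (M : Matrix n n K) :
    fixdim M = finrank K (End.eigenspace M.mulVecLin 1) := by
  have : LinearMap.ker (M - 1).mulVecLin = End.eigenspace M.mulVecLin 1 := by
    ext x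
    simp [sub_eq_zero]
  rw [fixdim, this]

variable [Fintype K]

lemma card_unitDet_eq_frameCount (m : ℕ) :
    (Nat.card {M : Matrix (Fin m) (Fin m) K // IsUnit M.det} : ℝ) =
      frameCount (Fintype.card K) m m := by
  rw [Nat.card_congr (unitDetEquivGL.trans (equiv_GL_linearindependent m)),
    card_linearIndependent_eq_frameCount, finrank_fin_fun]

lemma sum_card_fixdim_mul_frameCount {j : ℕ} (hj : j ≤ Fintype.card n) :
    ∑ e ∈ range (Fintype.card n + 1),
      (Nat.card {M : Matrix n n K // IsUnit M.det ∧ fixdim M = e} : ℝ) *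
        frameCount (Fintype.card K) j e =
      Nat.card {M : Matrix n n K // IsUnit M.det} := by
  let E := (unitDetEquivGL (n := n) (K := K)).trans GeneralLinearGroup.toLin.toEquiv
  have hfiber (e : ℕ) : Nat.card {M : Matrix n n K // IsUnit M.det ∧ fixdim M = e} =
      Nat.card {f : LinearMap.GeneralLinearGroup K (n → K) //
        finrank K (End.eigenspace (f : (n → K) →ₗ[K] n → K) 1) = e} :=
    Nat.card_congr <| (Equiv.subtypeSubtypeEquivSubtypeInter _ _).symm.trans <|
      E.subtypeEquiv fun M => by
        rw [fixdim_eq_finrank_eigenspace]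
        rfl
  have hn : finrank K (n → K) = Fintype.card n := finrank_fintype_fun_eq_card K
  simp_rw [hfiber]
  rw [Nat.card_congr E, ← hn]
  exact sum_card_finrank_eigenspace_mul_frameCount (hn ▸ hj)

end MatrixCounting

theorem stmt3_general (ℓ : ℕ) (hℓ : ℓ.Prime) (g : ℕ) (d : ℕ) (hd : d ≤ g) :
    PGL ℓ g d =
      (1 / (cardGL ℓ d : ℝ)) *
        ∑ j ∈ Finset.range (g - d + 1),
          ((-1 : ℝ) ^ j * (ℓ : ℝ) ^ ((j ^ 2 - j) / 2)) /
            ((ℓ : ℝ) ^ (d * j) * (cardGL ℓ j : ℝ)) := by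
  have : Fact ℓ.Prime := ⟨hℓ⟩
  have hq : 1 < (ℓ : ℝ) := by exact_mod_cast hℓ.one_lt
  have hGL (m : ℕ) : (cardGL ℓ m : ℝ) = frameCount ℓ m m := by
    rw [cardGL, card_unitDet_eq_frameCount, ZMod.card]
  have hcount (j : ℕ) (hj : j ≤ g) :
      ∑ e ∈ range (g + 1), (Nat.card {M : Matrix (Fin g) (Fin g) (ZMod ℓ) //
        IsUnit M.det ∧ fixdim M = e} : ℝ) * frameCount ℓ j e = cardGL ℓ g := by
    have := sum_card_fixdim_mul_frameCount (K := ZMod ℓ) (n := Fin g) (j := j)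
      (by rwa [Fintype.card_fin])
    rwa [Fintype.card_fin, ZMod.card] at this
  have key := frameCount_inversion hq hd hcount
  have hexp (j : ℕ) : (j ^ 2 - j) / 2 = j.choose 2 := by
    rw [Nat.choose_two_right, Nat.mul_sub_one, sq]
  have hP := (frameCount_pos hq (le_refl d)).ne'
  have hC := (frameCount_pos hq (le_refl g)).ne'
  rw [PGL, show (Nat.card {M : Matrix (Fin g) (Fin g) (ZMod ℓ) // IsUnit M.det} : ℝ) =
    cardGL ℓ g from rfl]
  simp_rw [hexp, hGL] at key ⊢
  rw [div_eq_iff hC]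
  field_simp
  linear_combination key

theorem stmt3 (ℓ : ℕ) (hℓ : ℓ.Prime) (g : ℕ) (hg : 1 ≤ g) (d : ℕ) (hd : d ≤ g) :
    PGL ℓ g d =
      (1 / (cardGL ℓ d : ℝ)) *
        ∑ j ∈ Finset.range (g - d + 1),
          ((-1 : ℝ) ^ j * (ℓ : ℝ) ^ ((j ^ 2 - j) / 2)) /
            ((ℓ : ℝ) ^ (d * j) * (cardGL ℓ j : ℝ)) :=
  stmt3_general ℓ hℓ g d hd
end

section
/- Let $q$ be a real number with $0 < q < 1$. Then both of the following series converge and: (i) $-\sum_{r=1}^\infty \frac{(-1)^r q^{r(r+1)/2}}{\prod_{j=1}^r (1 - q^j)} = 1 - \prod_{n=1}^\infty (1 - q^n)$; (ii) $-\sum_{r=1}^\infty \frac{(-1)^r q^{r^2}}{\prod_{j=1}^r (1 - q^{2j})} = 1 - \prod_{n=1}^\infty (1 - q^{2n-1}) = 1 - \prod_{n=1}^\infty (1 + q^n)^{-1}$. -/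
/-!
Both series are tails of Euler's `q`-exponential `E_t(z) = ∑ zⁿ t^(n choose 2) / (t;t)ₙ`, taken at
`(t, z) = (q, -q)` and `(q², -q)`. Comparing coefficients gives `E_t(z) = (1 + z) E_t(tz)`, hence
`E_t(z) = ∏_{j<N} (1 + z tʲ) · E_t(tᴺz)`; since `E_t` is continuous at `0` with `E_t(0) = 1`, letting
`N → ∞` gives Euler's product `E_t(z) = ∏ (1 + z tⁿ)`. The last identity is Euler's "odd = distinct":
`(1 + qⁿ)(1 - qⁿ) = 1 - q²ⁿ`, and splitting `∏ (1 - qⁿ)` by the parity of `n` leaves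
`∏ (1 + qⁿ) · ∏ (1 - q²ⁿ⁻¹) = 1` after cancelling the nonzero `∏ (1 - q²ⁿ)`.
-/

open Filter Finset Topology

section Algebra

variable {K : Type*} [Field K]

def qPochhammer (t : K) (n : ℕ) : K := ∏ j ∈ Icc 1 n, (1 - t ^ j)

@[simp]
lemma qPochhammer_zero (t : K) : qPochhammer t 0 = 1 := by
  simp [qPochhammer]

lemma qPochhammer_succ (t : K) (n : ℕ) :
    qPochhammer t (n + 1) = qPochhammer t n * (1 - t ^ (n + 1)) :=
  prod_Icc_succ_top (Nat.le_add_left 1 n) _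

def eulerTerm (t z : K) (n : ℕ) : K := z ^ n * t ^ n.choose 2 / qPochhammer t n

@[simp]
lemma eulerTerm_zero (t z : K) : eulerTerm t z 0 = 1 := by
  simp [eulerTerm]

lemma eulerTerm_succ (t z : K) (n : ℕ) :
    eulerTerm t z (n + 1) = z * t ^ n / (1 - t ^ (n + 1)) * eulerTerm t z n := by
  rw [eulerTerm, eulerTerm, qPochhammer_succ, Nat.choose_succ_succ' n 1, Nat.choose_one_right]
  simp only [div_eq_mul_inv, mul_inv]
  ring

lemma eulerTerm_mul_left (t z : K) (n : ℕ) : eulerTerm t (t * z) n = t ^ n * eulerTerm t z n := by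
  rw [eulerTerm, eulerTerm, mul_pow]
  ring

lemma eulerTerm_succ_sub_eulerTerm_mul_left (t z : K) {n : ℕ} (h : 1 - t ^ (n + 1) ≠ 0) :
    eulerTerm t z (n + 1) - eulerTerm t (t * z) (n + 1) = z * eulerTerm t (t * z) n := by
  rw [eulerTerm_succ, eulerTerm_succ, eulerTerm_mul_left]
  field_simp
  ring

lemma add_one_choose_two_mul_two (r : ℕ) : (r + 1).choose 2 * 2 = (r + 1) * r := by
  simpa using (Nat.add_one_mul_choose_eq r 1).symm

lemma eulerTerm_neg_self_succ (t : K) (r : ℕ) :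
    eulerTerm t (-t) (r + 1) =
      (-1) ^ (r + 1) * t ^ ((r + 1) * (r + 2) / 2) / qPochhammer t (r + 1) := by
  have hexp : (r + 1) * (r + 2) / 2 = (r + 1) + (r + 1).choose 2 := by
    rw [show (r + 1) * (r + 2) = (r + 1) * r + 2 * (r + 1) by ring, ← add_one_choose_two_mul_two]
    omega
  rw [eulerTerm, hexp, pow_add, neg_pow]
  ring

lemma eulerTerm_sq_neg_succ (q : K) (r : ℕ) :
    eulerTerm (q ^ 2) (-q) (r + 1) =
      (-1) ^ (r + 1) * q ^ ((r + 1) ^ 2) / qPochhammer (q ^ 2) (r + 1) := by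
  have hexp : (r + 1) ^ 2 = (r + 1) + 2 * (r + 1).choose 2 := by
    rw [show (r + 1) ^ 2 = (r + 1) * r + (r + 1) by ring, ← add_one_choose_two_mul_two]
    ring
  rw [eulerTerm, hexp, pow_add q, pow_mul q, neg_pow]
  ring

end Algebra

section Analysis

variable {𝕜 : Type*} [NormedField 𝕜] {t : 𝕜}

lemma one_sub_norm_le_norm_one_sub_pow (ht : ‖t‖ ≤ 1) {n : ℕ} (hn : n ≠ 0) :
    1 - ‖t‖ ≤ ‖1 - t ^ n‖ :=
  calc 1 - ‖t‖ ≤ 1 - ‖t‖ ^ n := by gcongr; exact pow_le_of_le_one (norm_nonneg t) ht hn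
    _ = ‖(1 : 𝕜)‖ - ‖t ^ n‖ := by rw [norm_one, norm_pow]
    _ ≤ ‖1 - t ^ n‖ := norm_sub_norm_le _ _

lemma one_sub_pow_ne_zero (ht : ‖t‖ < 1) {n : ℕ} (hn : n ≠ 0) : 1 - t ^ n ≠ 0 :=
  norm_pos_iff.mp <| (sub_pos.2 ht).trans_le (one_sub_norm_le_norm_one_sub_pow ht.le hn)

lemma summable_norm_eulerTerm (ht : ‖t‖ < 1) (z : 𝕜) : Summable fun n ↦ ‖eulerTerm t z n‖ := by
  have hratio : Tendsto (fun n ↦ ‖z‖ * ‖t‖ ^ n / (1 - ‖t‖)) atTop (𝓝 0) := by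
    simpa using ((tendsto_pow_atTop_nhds_zero_of_lt_one (norm_nonneg t) ht).const_mul ‖z‖).div_const
      (1 - ‖t‖)
  refine summable_of_ratio_norm_eventually_le (r := 1 / 2) (by norm_num) ?_
  filter_upwards [hratio.eventually (ge_mem_nhds (by norm_num : (0 : ℝ) < 1 / 2))] with n hn
  rw [norm_norm, norm_norm, eulerTerm_succ, norm_mul]
  gcongr
  calc ‖z * t ^ n / (1 - t ^ (n + 1))‖ = ‖z‖ * ‖t‖ ^ n / ‖1 - t ^ (n + 1)‖ := by
        rw [norm_div, norm_mul, norm_pow]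
    _ ≤ ‖z‖ * ‖t‖ ^ n / (1 - ‖t‖) := by
        gcongr
        exact one_sub_norm_le_norm_one_sub_pow ht.le n.succ_ne_zero
    _ ≤ 1 / 2 := hn

noncomputable def eulerSum (t z : 𝕜) : 𝕜 := ∑' n, eulerTerm t z n

lemma eulerSum_zero (t : 𝕜) : eulerSum t 0 = 1 := by
  rw [eulerSum, tsum_eq_single 0 fun n hn ↦ by simp [eulerTerm, hn], eulerTerm_zero]

variable [CompleteSpace 𝕜]

lemma eulerSum_eq_one_add_mul (ht : ‖t‖ < 1) (z : 𝕜) :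
    eulerSum t z = (1 + z) * eulerSum t (t * z) := by
  have hsum : ∀ w, Summable (eulerTerm t w) := fun w ↦ (summable_norm_eulerTerm ht w).of_norm
  have hdiff : eulerSum t z - eulerSum t (t * z) = z * eulerSum t (t * z) := by
    rw [eulerSum, eulerSum, ← (hsum z).tsum_sub (hsum (t * z)),
      ((hsum z).sub (hsum (t * z))).tsum_eq_zero_add]
    simp only [eulerTerm_zero, sub_self, zero_add,
      eulerTerm_succ_sub_eulerTerm_mul_left t z (one_sub_pow_ne_zero ht (Nat.succ_ne_zero _))]
    exact tsum_mul_left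
  linear_combination hdiff

lemma eulerSum_eq_prod_mul (ht : ‖t‖ < 1) (z : 𝕜) (N : ℕ) :
    eulerSum t z = (∏ j ∈ range N, (1 + z * t ^ j)) * eulerSum t (t ^ N * z) := by
  induction N with
  | zero => simp
  | succ N ih =>
    rw [ih, eulerSum_eq_one_add_mul ht (t ^ N * z), prod_range_succ, pow_succ', mul_assoc t]
    ring

lemma continuousAt_eulerSum_zero (ht : ‖t‖ < 1) : ContinuousAt (eulerSum t) 0 := by
  refine (continuousOn_tsum (fun n ↦ ?_) (summable_norm_eulerTerm ht 1) fun n w hw ↦ ?_).continuousAt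
    (Metric.closedBall_mem_nhds 0 one_pos)
  · unfold eulerTerm
    fun_prop
  · rw [mem_closedBall_zero_iff] at hw
    simp only [eulerTerm, norm_div, norm_mul, norm_pow, one_pow, one_mul]
    gcongr
    exact mul_le_of_le_one_left (by positivity) (pow_le_one₀ (norm_nonneg w) hw)

lemma multipliable_one_add_mul_pow (c : 𝕜) (ht : ‖t‖ < 1) :
    Multipliable fun n ↦ 1 + c * t ^ n :=
  multipliable_one_add_of_summable <| by
    simpa [norm_mul, norm_pow] using (summable_geometric_of_lt_one (norm_nonneg t) ht).mul_left ‖c‖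

lemma tprod_one_add_mul_pow_ne_zero {c : 𝕜} (hc : ‖c‖ < 1) (ht : ‖t‖ < 1) :
    ∏' n, (1 + c * t ^ n) ≠ 0 := by
  refine tprod_one_add_ne_zero_of_summable (fun n h ↦ ?_) <| by
    simpa [norm_mul, norm_pow] using (summable_geometric_of_lt_one (norm_nonneg t) ht).mul_left ‖c‖
  have hnorm : ‖c * t ^ n‖ < 1 := by
    rw [norm_mul, norm_pow]
    exact mul_lt_one_of_nonneg_of_lt_one_left (norm_nonneg c) hc (pow_le_one₀ (norm_nonneg t) ht.le)
  rw [eq_neg_of_add_eq_zero_right h, norm_neg, norm_one] at hnorm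
  exact hnorm.false

theorem hasProd_one_add_mul_pow_eulerSum (ht : ‖t‖ < 1) (z : 𝕜) :
    HasProd (fun n ↦ 1 + z * t ^ n) (eulerSum t z) := by
  have hmult := multipliable_one_add_mul_pow z ht
  have htail : Tendsto (fun N ↦ eulerSum t (t ^ N * z)) atTop (𝓝 1) := by
    rw [← eulerSum_zero t]
    exact (continuousAt_eulerSum_zero ht).tendsto.comp <| by
      simpa using (tendsto_pow_atTop_nhds_zero_of_norm_lt_one ht).mul_const z
  have hlim := hmult.hasProd.tendsto_prod_nat.mul htail
  simp only [← eulerSum_eq_prod_mul ht, mul_one] at hlim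
  rw [tendsto_const_nhds_iff.1 hlim]
  exact hmult.hasProd

theorem hasSum_eulerTerm_succ (ht : ‖t‖ < 1) (z : 𝕜) :
    HasSum (fun n ↦ eulerTerm t z (n + 1)) (∏' n, (1 + z * t ^ n) - 1) := by
  rw [(hasProd_one_add_mul_pow_eulerSum ht z).tprod_eq]
  simpa [eulerSum] using (hasSum_nat_add_iff' 1).2 (summable_norm_eulerTerm ht z).of_norm.hasSum

theorem tprod_one_sub_pow_odd_mul_tprod_one_add_pow {q : 𝕜} (hq : ‖q‖ < 1) :
    (∏' n : ℕ, (1 - q ^ (2 * n + 1))) * ∏' n : ℕ, (1 + q ^ (n + 1)) = 1 := by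
  have hq2 : ‖q ^ 2‖ < 1 := by
    rw [norm_pow]
    exact pow_lt_one₀ (norm_nonneg q) hq two_ne_zero
  have hodd : Multipliable fun n : ℕ ↦ 1 - q ^ (2 * n + 1) :=
    (multipliable_one_add_mul_pow (-q) hq2).congr fun n ↦ by ring
  have heven : Multipliable fun n : ℕ ↦ 1 - q ^ (2 * n + 1 + 1) :=
    (multipliable_one_add_mul_pow (-q ^ 2) hq2).congr fun n ↦ by ring
  have hminus : Multipliable fun n : ℕ ↦ 1 - q ^ (n + 1) :=
    (multipliable_one_add_mul_pow (-q) hq).congr fun n ↦ by ring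
  have hplus : Multipliable fun n : ℕ ↦ 1 + q ^ (n + 1) :=
    (multipliable_one_add_mul_pow q hq).congr fun n ↦ by ring
  have hsplit : (∏' n : ℕ, (1 - q ^ (2 * n + 1))) * ∏' n : ℕ, (1 - q ^ (2 * n + 1 + 1)) =
      ∏' n : ℕ, (1 - q ^ (n + 1)) :=
    tprod_even_mul_odd (f := fun n ↦ 1 - q ^ (n + 1)) hodd heven
  have hpair : (∏' n : ℕ, (1 + q ^ (n + 1))) * ∏' n : ℕ, (1 - q ^ (n + 1)) =
      ∏' n : ℕ, (1 - q ^ (2 * n + 1 + 1)) := by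
    rw [← hplus.tprod_mul hminus]
    exact tprod_congr fun n ↦ by ring
  have hne : ∏' n : ℕ, (1 - q ^ (2 * n + 1 + 1)) ≠ 0 := by
    rw [tprod_congr fun n ↦ show 1 - q ^ (2 * n + 1 + 1) = 1 + -q ^ 2 * (q ^ 2) ^ n by ring]
    exact tprod_one_add_mul_pow_ne_zero (by rwa [norm_neg]) hq2
  refine mul_right_cancel₀ hne ?_
  linear_combination (∏' n : ℕ, (1 + q ^ (n + 1))) * hsplit + hpair

theorem tprod_one_sub_pow_odd_eq_tprod_inv {q : 𝕜} (hq : ‖q‖ < 1) :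
    ∏' n : ℕ, (1 - q ^ (2 * n + 1)) = ∏' n : ℕ, (1 + q ^ (n + 1))⁻¹ := by
  have hmul := tprod_one_sub_pow_odd_mul_tprod_one_add_pow hq
  rw [((multipliable_one_add_mul_pow q hq).congr fun n ↦ by ring).tprod_inv₀
    (right_ne_zero_of_mul_eq_one hmul)]
  exact eq_inv_of_mul_eq_one_left hmul

end Analysis

theorem stmt12 (q : ℝ) (h0 : 0 < q) (h1 : q < 1) :
    (Summable fun r : ℕ =>
      ((-1 : ℝ) ^ (r + 1) * q ^ ((r + 1) * (r + 2) / 2)) /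
        ∏ j ∈ Finset.Icc 1 (r + 1), (1 - q ^ j)) ∧
    (Summable fun r : ℕ =>
      ((-1 : ℝ) ^ (r + 1) * q ^ ((r + 1) ^ 2)) /
        ∏ j ∈ Finset.Icc 1 (r + 1), (1 - q ^ (2 * j))) ∧
    (-(∑' r : ℕ,
        ((-1 : ℝ) ^ (r + 1) * q ^ ((r + 1) * (r + 2) / 2)) /
          ∏ j ∈ Finset.Icc 1 (r + 1), (1 - q ^ j)) =
      1 - ∏' n : ℕ, (1 - q ^ (n + 1))) ∧
    (-(∑' r : ℕ,
        ((-1 : ℝ) ^ (r + 1) * q ^ ((r + 1) ^ 2)) /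
          ∏ j ∈ Finset.Icc 1 (r + 1), (1 - q ^ (2 * j))) =
      1 - ∏' n : ℕ, (1 - q ^ (2 * (n + 1) - 1))) ∧
    (1 - ∏' n : ℕ, (1 - q ^ (2 * (n + 1) - 1)) = 1 - ∏' n : ℕ, (1 + q ^ (n + 1))⁻¹) := by
  have hq : ‖q‖ < 1 := by rwa [Real.norm_of_nonneg h0.le]
  have hq2 : ‖q ^ 2‖ < 1 := by
    rw [norm_pow]
    exact pow_lt_one₀ (norm_nonneg q) hq two_ne_zero
  have hodd : ∀ n : ℕ, 2 * (n + 1) - 1 = 2 * n + 1 := fun n ↦ by omega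
  have hsum₁ : HasSum (fun r : ℕ => ((-1 : ℝ) ^ (r + 1) * q ^ ((r + 1) * (r + 2) / 2)) /
      ∏ j ∈ Finset.Icc 1 (r + 1), (1 - q ^ j)) (∏' n : ℕ, (1 - q ^ (n + 1)) - 1) := by
    have h := hasSum_eulerTerm_succ hq (-q)
    simp only [eulerTerm_neg_self_succ] at h
    rwa [tprod_congr fun n ↦ show 1 + -q * q ^ n = 1 - q ^ (n + 1) by ring] at h
  have hsum₂ : HasSum (fun r : ℕ => ((-1 : ℝ) ^ (r + 1) * q ^ ((r + 1) ^ 2)) /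
      ∏ j ∈ Finset.Icc 1 (r + 1), (1 - q ^ (2 * j))) (∏' n : ℕ, (1 - q ^ (2 * (n + 1) - 1)) - 1) := by
    have h := hasSum_eulerTerm_succ hq2 (-q)
    have hpoch : ∀ n, qPochhammer (q ^ 2) n = ∏ j ∈ Finset.Icc 1 n, (1 - q ^ (2 * j)) :=
      fun n ↦ prod_congr rfl fun j _ ↦ by rw [pow_mul]
    simp only [eulerTerm_sq_neg_succ, hpoch] at h
    rwa [tprod_congr fun n ↦ show 1 + -q * (q ^ 2) ^ n = 1 - q ^ (2 * (n + 1) - 1) by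
      rw [hodd]; ring] at h
  refine ⟨hsum₁.summable, hsum₂.summable, by rw [hsum₁.tsum_eq]; ring, by rw [hsum₂.tsum_eq]; ring,
    ?_⟩
  simp only [hodd, tprod_one_sub_pow_odd_eq_tprod_inv hq]
end

section
/- There exists a group isomorphism between $\mathrm{Sp}_4(\mathbb{F}_2)$ and the symmetric group on $6$ elements. In particular, $\#\mathrm{Sp}_4(\mathbb{F}_2) = 720$. -/
open Matrix

/-- The standard symplectic form matrix `Ω = [[0, I₂], [-I₂, 0]]` over `F₂`. -/
def Om2 : Matrix (Fin 2 ⊕ Fin 2) (Fin 2 ⊕ Fin 2) (ZMod 2) :=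
  Matrix.fromBlocks 0 1 (-1) 0

private lemma sp_mul_aux {R n : Type} [CommRing R] [Fintype n] [DecidableEq n]
    (Ω A B : Matrix n n R) (hA : Aᵀ * Ω * A = Ω) (hB : Bᵀ * Ω * B = Ω) :
    (A * B)ᵀ * Ω * (A * B) = Ω := by
  rw [Matrix.transpose_mul]
  have : Bᵀ * Aᵀ * Ω * (A * B) = Bᵀ * (Aᵀ * Ω * A) * B := by
    simp only [mul_assoc]
  rw [this, hA]
  exact hB

private lemma sp_inv_aux {R n : Type} [CommRing R] [Fintype n] [DecidableEq n]
    (Ω A B : Matrix n n R) (hA : Aᵀ * Ω * A = Ω) (hAB : A * B = 1) :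
    Bᵀ * Ω * B = Ω := by
  conv_lhs => rw [← hA]
  have : Bᵀ * (Aᵀ * Ω * A) * B = (A * B)ᵀ * Ω * (A * B) := by
    rw [Matrix.transpose_mul]; simp only [mul_assoc]
  rw [this, hAB]
  simp

/-- `Sp₄(F₂)`: the subgroup of `GL₄(F₂)` consisting of the matrices `M` with
`Mᵀ Ω M = Ω`, a group under matrix multiplication. -/
def Sp4F2 : Subgroup (Matrix (Fin 2 ⊕ Fin 2) (Fin 2 ⊕ Fin 2) (ZMod 2))ˣ where
  carrier := {M | M.valᵀ * Om2 * M.val = Om2}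
  one_mem' := by
    show (1 : (Matrix (Fin 2 ⊕ Fin 2) (Fin 2 ⊕ Fin 2) (ZMod 2))ˣ).valᵀ * Om2 * _ = Om2
    simp
  mul_mem' := by
    intro a b ha hb
    show ((a * b).val)ᵀ * Om2 * (a * b).val = Om2
    rw [Units.val_mul]
    exact sp_mul_aux Om2 a.val b.val ha hb
  inv_mem' := by
    intro a ha
    show ((a⁻¹).val)ᵀ * Om2 * (a⁻¹).val = Om2
    exact sp_inv_aux Om2 a.val (a⁻¹).val ha (Units.mul_inv a)

/-!
`Sp₄(𝔽₂)` acts, by `Q ↦ Q ∘ M⁻¹`, on the six quadratic forms on `𝔽₂⁴` that polarize to the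
symplectic form `ω` and have Arf invariant `1`. Every quadratic refinement of `ω` is
`q0 + ω v` for a unique `v`, where `q0` is the hyperbolic form, and it has Arf invariant `q0 v`,
detected by the number of its values equal to `1`. In these coordinates the action is the affine
map `v ↦ M v + c`, where `ω c` is the functional `q0 ∘ M⁻¹ + q0`, linear because `M⁻¹`
preserves `ω`.
The action is faithful since every vector is a sum of two of the six `v`, and its image
contains a `6`-cycle together with a transposition of two adjacent points, which generate `S₆`.
-/

theorem Matrix.mulVec_dotProduct_mulVec_mulVec_of_transpose_mul_mul {R n : Type*} [CommRing R]
    [Fintype n] {Ω N : Matrix n n R} (h : Nᵀ * Ω * N = Ω) (u x : n → R) :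
    (N *ᵥ u) ⬝ᵥ (Ω *ᵥ (N *ᵥ x)) = u ⬝ᵥ (Ω *ᵥ x) := by
  rw [← vecMul_transpose, dotProduct_mulVec, vecMul_vecMul, dotProduct_mulVec, vecMul_vecMul, h,
    ← dotProduct_mulVec]

theorem ZMod.eq_dotProduct_of_map_add {ι : Type*} [Fintype ι] [DecidableEq ι] {n : ℕ}
    {f : (ι → ZMod n) → ZMod n} (hf : ∀ x y, f (x + y) = f x + f y) (x : ι → ZMod n) :
    f x = (fun j => f (Pi.single j 1)) ⬝ᵥ x := by
  refine (LinearMap.pi_apply_eq_sum_univ ((AddMonoidHom.mk' f hf).toZModLinearMap n) x).trans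
    (Finset.sum_congr rfl fun i _ => ?_)
  show x i • f (fun j => if i = j then 1 else 0) = f (Pi.single i 1) * x i
  rw [smul_eq_mul, mul_comm]
  congr 2
  funext j
  simp only [Pi.single_apply, @eq_comm _ j]

namespace Sp4F2

theorem mem_iff {M : (Matrix (Fin 2 ⊕ Fin 2) (Fin 2 ⊕ Fin 2) (ZMod 2))ˣ} :
    M ∈ Sp4F2 ↔ M.valᵀ * Om2 * M.val = Om2 :=
  Iff.rfl

abbrev V := Fin 2 ⊕ Fin 2 → ZMod 2

def q0 (x : V) : ZMod 2 := x (.inl 0) * x (.inr 0) + x (.inl 1) * x (.inr 1)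

def ω (u x : V) : ZMod 2 := u ⬝ᵥ (Om2 *ᵥ x)

theorem q0_add : ∀ x y : V, q0 (x + y) = q0 x + q0 y + ω x y := by decide

theorem ω_add_left (u w x : V) : ω (u + w) x = ω u x + ω w x := add_dotProduct u w _

theorem ω_smul_smul (M : Sp4F2) (u x : V) : ω (M • u) (M • x) = ω u x :=
  mulVec_dotProduct_mulVec_mulVec_of_transpose_mul_mul M.2 u x

theorem ω_om2_mulVec (r x : V) : ω (Om2 *ᵥ r) x = r ⬝ᵥ x := by
  have h : Om2ᵀ * Om2 = 1 := by decide
  rw [ω, ← vecMul_transpose, dotProduct_mulVec, vecMul_vecMul, h, vecMul_one]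

theorem ω_left_injective {u w : V} (h : ∀ x, ω u x = ω w x) : u = w := by
  have hΩ : ∀ v : V, Om2 *ᵥ (Om2 *ᵥ v) = v := fun v => by
    rw [mulVec_mulVec, show Om2 * Om2 = 1 by decide, one_mulVec]
  rw [← hΩ u, ← hΩ w]
  congr 1
  refine dotProduct_eq _ _ fun x => ?_
  rw [← ω_om2_mulVec, ← ω_om2_mulVec, hΩ, hΩ, h]

def defect (M : Sp4F2) : V := Om2 *ᵥ fun j => q0 (M • Pi.single j 1) + q0 (Pi.single j 1)

theorem ω_defect (M : Sp4F2) (x : V) : ω (defect M) x = q0 (M • x) + q0 x := by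
  have hadd (x y : V) :
      q0 (M • (x + y)) + q0 (x + y) = (q0 (M • x) + q0 x) + (q0 (M • y) + q0 y) := by
    rw [smul_add, q0_add, q0_add, ω_smul_smul]
    ring_nf; reduce_mod_char
  rw [defect, ω_om2_mulVec]
  exact (ZMod.eq_dotProduct_of_map_add (f := fun y => q0 (M • y) + q0 y) hadd x).symm

def qForm (v x : V) : ZMod 2 := q0 x + ω v x

theorem qForm_injective : Function.Injective qForm := fun u w h =>
  ω_left_injective fun x => by simpa [qForm] using congrFun h x

def affineSMul (M : Sp4F2) (v : V) : V := M • v + defect M⁻¹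

theorem qForm_affineSMul (M : Sp4F2) (v : V) :
    qForm (affineSMul M v) = fun x => qForm v (M⁻¹ • x) := by
  funext x
  have h : ω v (M⁻¹ • x) = ω (M • v) x := by rw [← ω_smul_smul M, smul_inv_smul]
  rw [qForm, qForm, affineSMul, ω_add_left, ω_defect, h]
  ring_nf; reduce_mod_char

theorem affineSMul_one (v : V) : affineSMul 1 v = v :=
  qForm_injective (by rw [qForm_affineSMul]; simp)

theorem affineSMul_mul (M N : Sp4F2) (v : V) :
    affineSMul (M * N) v = affineSMul M (affineSMul N v) :=
  qForm_injective (by simp only [qForm_affineSMul, _root_.mul_inv_rev, mul_smul])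

theorem q0_eq_one_iff_card :
    ∀ v : V, q0 v = 1 ↔ (Finset.univ.filter fun x => qForm v x = 1).card = 10 := by
  decide

theorem q0_affineSMul_eq_one (M : Sp4F2) {v : V} (hv : q0 v = 1) : q0 (affineSMul M v) = 1 := by
  rw [q0_eq_one_iff_card, qForm_affineSMul, ← (q0_eq_one_iff_card v).1 hv]
  exact Finset.card_equiv (MulAction.toPerm M⁻¹) fun x => by simp

def ArfOneForm : Type := {v : V // q0 v = 1}

instance : Fintype ArfOneForm := inferInstanceAs (Fintype {v : V // q0 v = 1})
instance : DecidableEq ArfOneForm := inferInstanceAs (DecidableEq {v : V // q0 v = 1})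

theorem card_arfOneForm : Fintype.card ArfOneForm = 6 := by decide

instance : MulAction Sp4F2 ArfOneForm where
  smul M v := ⟨affineSMul M v.1, q0_affineSMul_eq_one M v.2⟩
  one_smul v := Subtype.ext (affineSMul_one v.1)
  mul_smul M N v := Subtype.ext (affineSMul_mul M N v.1)

theorem exists_q0_eq_one_add_eq : ∀ x : V, ∃ v w : V, q0 v = 1 ∧ q0 w = 1 ∧ v + w = x := by
  decide

theorem toPermHom_injective : Function.Injective (MulAction.toPermHom Sp4F2 ArfOneForm) := by
  rw [injective_iff_map_eq_one]
  intro M hM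
  have hfix (v : V) (hv : q0 v = 1) : M • v = v + defect M⁻¹ := by
    have h : affineSMul M v = v := congrArg Subtype.val (Equiv.ext_iff.mp hM ⟨v, hv⟩)
    exact (eq_sub_of_add_eq h).trans (CharTwo.sub_eq_add _ _)
  have hsmul (x : V) : M • x = x := by
    obtain ⟨v, w, hv, hw, rfl⟩ := exists_q0_eq_one_add_eq x
    rw [smul_add, hfix v hv, hfix w hw, add_add_add_comm, CharTwo.add_self_eq_zero, add_zero]
  exact Subtype.ext (Units.ext (ext_iff_mulVec.2 fun x => (hsmul x).trans (one_mulVec x).symm))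

def ofCoords (a b c d : ZMod 2) (h : a * c + b * d = 1 := by decide) : ArfOneForm :=
  ⟨Sum.elim ![a, b] ![c, d], h⟩

def rotationOrbit : List ArfOneForm :=
  [ofCoords 0 1 0 1, ofCoords 1 1 1 0, ofCoords 0 1 1 1,
    ofCoords 1 0 1 0, ofCoords 1 1 0 1, ofCoords 1 0 1 1]

theorem rotationOrbit_nodup : rotationOrbit.Nodup := by decide

theorem isCycle_formPerm_rotationOrbit : rotationOrbit.formPerm.IsCycle :=
  List.isCycle_formPerm rotationOrbit_nodup (by decide)

theorem support_formPerm_rotationOrbit : rotationOrbit.formPerm.support = Finset.univ := by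
  rw [List.support_formPerm_of_nodup _ rotationOrbit_nodup (by decide)]
  decide

def rotation : Sp4F2 :=
  ⟨⟨fromBlocks !![0, 1; 1, 0] !![0, 1; 1, 0] !![0, 1; 1, 0] 0,
    fromBlocks 0 !![0, 1; 1, 0] !![0, 1; 1, 0] !![0, 1; 1, 0], by decide, by decide⟩,
    mem_iff.2 (by decide)⟩

def reflection : Sp4F2 :=
  ⟨⟨fromBlocks !![0, 1; 0, 1] !![1, 0; 0, 0] !![1, 1; 1, 1] !![0, 0; 1, 1],
    fromBlocks !![0, 1; 0, 1] !![1, 0; 0, 0] !![1, 1; 1, 1] !![0, 0; 1, 1], by decide, by decide⟩,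
    mem_iff.2 (by decide)⟩

theorem toPerm_rotation : MulAction.toPermHom Sp4F2 ArfOneForm rotation = rotationOrbit.formPerm :=
  Equiv.ext (by decide)

theorem toPerm_reflection : MulAction.toPermHom Sp4F2 ArfOneForm reflection =
    Equiv.swap (ofCoords 0 1 0 1) (ofCoords 1 1 1 0) :=
  Equiv.ext (by decide)

theorem toPermHom_surjective : Function.Surjective (MulAction.toPermHom Sp4F2 ArfOneForm) := by
  rw [← MonoidHom.range_eq_top, eq_top_iff, ← Equiv.Perm.closure_cycle_adjacent_swap
    isCycle_formPerm_rotationOrbit support_formPerm_rotationOrbit (ofCoords 0 1 0 1),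
    Subgroup.closure_le]
  rintro σ (rfl | rfl)
  · exact ⟨rotation, toPerm_rotation⟩
  · exact ⟨reflection, toPerm_reflection⟩

end Sp4F2

/-- There is a group isomorphism between `Sp₄(F₂)` and the symmetric group on six
elements; in particular `#Sp₄(F₂) = 720`. -/
theorem stmt18 : Nonempty (Sp4F2 ≃* Equiv.Perm (Fin 6)) ∧ Nat.card Sp4F2 = 720 := by
  let e : Sp4F2 ≃* Equiv.Perm (Fin 6) :=
    (MulEquiv.ofBijective _ ⟨Sp4F2.toPermHom_injective, Sp4F2.toPermHom_surjective⟩).trans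
      (Fintype.equivFinOfCardEq Sp4F2.card_arfOneForm).permCongrHom
  refine ⟨⟨e⟩, ?_⟩
  rw [Nat.card_congr e.toEquiv, Nat.card_perm, Nat.card_eq_fintype_card, Fintype.card_fin]
  rfl
end
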